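/- Vanishing of the zero Fourier mode after the nonlinear change of variable: let y ≥ 0 and define α(a) = a - sin(2a)/(2·cosh(2(y+Ψ))), a strictly increasing bijection of [0,2π]. Let ω₀ : ℝ → ℝ be continuous and 2π-periodic with ∫₀^{2π} W(a,y)·ω₀(a) da = 0, and define ω̃(α) = ω₀(a(α))·cosh(2(y+Ψ)) where a(α) is the inverse of α. Then ∫₀^{2π} ω̃(α) dα = 0. -/

import Mathlib

open Real MeasureTheory intervalIntegral

/-!
Write `K = cosh (2 (y + Ψ)) ≥ 1`. The map `α a = a - sin (2a) / (2K)` fixes `0` and `2π` and has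
derivative `1 - cos (2a) / K ≥ 0`, so the substitution `b = α a` is valid for any integrand.
Since `ainv ∘ α = id`, it turns `∫ ω₀ (ainv b) K db` into `∫ ω₀ a (K - cos (2a)) da`, which is
`2 / C²` times the vanishing mean `∫ W(a, y) ω₀ a da`.
-/

/-- The change of variable `α`, with `K` standing for `cosh (2 (y + Ψ))`. -/
noncomputable def alpha (K a : ℝ) : ℝ := a - sin (2 * a) / (2 * K)

lemma hasDerivAt_alpha (K a : ℝ) : HasDerivAt (alpha K) (1 - cos (2 * a) / K) a := by
  have hsin : HasDerivAt (fun x => sin (2 * x)) (cos (2 * a) * 2) a := by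
    simpa using ((hasDerivAt_id a).const_mul 2).sin
  have := (hasDerivAt_id' a).sub (hsin.div_const (2 * K))
  rwa [mul_comm (cos _), mul_div_mul_left _ _ two_ne_zero] at this

lemma one_sub_cos_div_nonneg {K : ℝ} (hK : 1 ≤ K) (x : ℝ) : 0 ≤ 1 - cos x / K := by
  rw [sub_nonneg, div_le_one (by linarith)]
  linarith [cos_le_one x]

lemma alpha_zero (K : ℝ) : alpha K 0 = 0 := by
  simp [alpha]

lemma alpha_two_pi (K : ℝ) : alpha K (2 * π) = 2 * π := by
  rw [alpha, show 2 * (2 * π) = (4 : ℕ) * π by push_cast; ring, sin_nat_mul_pi, zero_div, sub_zero]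

lemma integral_eq_integral_comp_alpha {K : ℝ} (hK : 1 ≤ K) (g : ℝ → ℝ) :
    ∫ b in (0 : ℝ)..(2 * π), g b =
      ∫ a in (0 : ℝ)..(2 * π), g (alpha K a) * (1 - cos (2 * a) / K) := by
  have hderiv : ∀ a, HasDerivAt (alpha K) (1 - cos (2 * a) / K) a := hasDerivAt_alpha K
  have hcont : Continuous (alpha K) :=
    continuous_iff_continuousAt.2 fun a => (hderiv a).continuousAt
  have := integral_comp_mul_deriv_of_deriv_nonneg (a := 0) (b := 2 * π) (g := g) hcont.continuousOn
    (fun a _ => hderiv a) (fun a _ => one_sub_cos_div_nonneg hK (2 * a))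
  rwa [alpha_zero, alpha_two_pi, eq_comm] at this

theorem zero_mode_vanishes_general (C Ψ : ℝ) (hC : 0 < C) (y : ℝ)
    (ainv : ℝ → ℝ)
    (hleft : ∀ a : ℝ, ainv (a - Real.sin (2 * a) / (2 * Real.cosh (2 * (y + Ψ)))) = a)
    (ω₀ : ℝ → ℝ)
    (hmean : ∫ a in (0:ℝ)..(2 * π),
      (C ^ 2 / 2 * (Real.cosh (2 * (y + Ψ)) - Real.cos (2 * a))) * ω₀ a = 0) :
    ∫ b in (0:ℝ)..(2 * π), ω₀ (ainv b) * Real.cosh (2 * (y + Ψ)) = 0 := by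
  set K := cosh (2 * (y + Ψ))
  have hK : 1 ≤ K := one_le_cosh _
  have hweight : ∀ a, ω₀ (ainv (alpha K a)) * K * (1 - cos (2 * a) / K)
      = 2 / C ^ 2 * (C ^ 2 / 2 * (K - cos (2 * a)) * ω₀ a) := fun a => by
    rw [show ainv (alpha K a) = a from hleft a]
    field_simp [hC.ne', (by linarith : K ≠ 0)]
  rw [integral_eq_integral_comp_alpha hK, integral_congr fun a _ => hweight a,
    intervalIntegral.integral_const_mul, hmean, mul_zero]

/-- Vanishing of the zero Fourier mode of `ω̃` after the change of variable `a ↦ α`. -/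
theorem zero_mode_vanishes (C Ψ : ℝ) (hC : 0 < C) (hΨ : 0 < Ψ) (y : ℝ) (hy : 0 ≤ y)
    (ainv : ℝ → ℝ)
    (hleft : ∀ a : ℝ, ainv (a - Real.sin (2 * a) / (2 * Real.cosh (2 * (y + Ψ)))) = a)
    (hright : ∀ b : ℝ,
      ainv b - Real.sin (2 * ainv b) / (2 * Real.cosh (2 * (y + Ψ))) = b)
    (ω₀ : ℝ → ℝ) (hcont : Continuous ω₀) (hper : ∀ a : ℝ, ω₀ (a + 2 * π) = ω₀ a)
    (hmean : ∫ a in (0:ℝ)..(2 * π),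
      (C ^ 2 / 2 * (Real.cosh (2 * (y + Ψ)) - Real.cos (2 * a))) * ω₀ a = 0) :
    ∫ b in (0:ℝ)..(2 * π), ω₀ (ainv b) * Real.cosh (2 * (y + Ψ)) = 0 :=
  zero_mode_vanishes_general C Ψ hC y ainv hleft ω₀ hmean
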